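/- arXiv:2004.11827 — 2 statements merged into one kernel-verified Lean document; each statement's English description precedes it below -/
import Mathlib

section
/- Let T(c) = V'∘D(c)∘U with D bounded (‖D(c)‖ ≤ C‖c‖_X), and suppose the singular values satisfy σ_{ℓ,U} ≤ C ℓ^{-β} and σ_{k,V} ≤ C k^{-α} with β > 1/2 and α > β + 1/2. Then for every δ > 0 there exists an operator T_{K̂} of rank K̂ ≲ δ^{-1/β} (a hyperbolic-cross truncation built from the singular systems of U and V') such that ‖T − T_{K̂}‖_{L(X, HS(Y,Z'))} ≤ C'·δ. -/
set_option maxHeartbeats 4000000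

open scoped RealInnerProductSpace

section Helpers

variable {E : Type*} [NormedAddCommGroup E] [InnerProductSpace ℝ E] [CompleteSpace E]

private lemma aux_sq_rpow {b : ℝ} (hb : 0 ≤ b) (e : ℝ) : (b ^ e) ^ 2 = b ^ (2 * e) := by
  rw [← Real.rpow_natCast (b ^ e) 2, ← Real.rpow_mul hb]
  norm_num
  ring_nf

private lemma aux_rpow_summable {r : ℝ} (hr : 1 < r) :
    Summable fun k : ℕ => ((k : ℝ) + 1) ^ (-r) := by
  have h : Summable (fun n : ℕ => (n : ℝ) ^ (-r)) := Real.summable_nat_rpow.2 (by linarith)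
  have h2 := (summable_nat_add_iff 1).2 h
  exact h2.congr fun n => by push_cast; ring_nf

private lemma aux_summable_mul {f g : ℕ → ℝ} (hf : Summable fun i => f i ^ 2)
    (hg : Summable fun i => g i ^ 2) : Summable fun i => f i * g i := by
  have habs : Summable fun i => |f i * g i| := by
    refine Summable.of_nonneg_of_le (fun i => abs_nonneg _) (fun i => ?_)
      ((hf.add hg).div_const 2)
    have h1 : |f i * g i| = |f i| * |g i| := abs_mul _ _
    nlinarith [sq_nonneg (|f i| - |g i|), sq_abs (f i), sq_abs (g i), abs_nonneg (f i),
      abs_nonneg (g i)]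
  exact habs.of_abs

private lemma aux_summable_smul {v : ℕ → E} (hv : Orthonormal ℝ v) {f : ℕ → ℝ}
    (hf : Summable fun i => f i ^ 2) : Summable fun i => f i • v i := by
  have h := (hv.orthogonalFamily.summable_iff_norm_sq_summable f).2
    (by simpa [Real.norm_eq_abs, sq_abs] using hf)
  exact h.congr fun i => by simp [LinearIsometry.toSpanSingleton_apply]

private lemma aux_inner_tsum {v : ℕ → E} (hv : Orthonormal ℝ v) {f : ℕ → ℝ}
    (hf : Summable fun i => f i ^ 2) (y : E) :
    ⟪y, ∑' i, f i • v i⟫ = ∑' i, f i * ⟪y, v i⟫ := by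
  have hs := aux_summable_smul hv hf
  calc ⟪y, ∑' i, f i • v i⟫ = innerSL ℝ y (∑' i, f i • v i) := rfl
    _ = ∑' i, innerSL ℝ y (f i • v i) := (innerSL ℝ y).map_tsum hs
    _ = ∑' i, f i * ⟪y, v i⟫ := tsum_congr fun i => by
        simp [inner_smul_right]

private lemma aux_coeff {v : ℕ → E} (hv : Orthonormal ℝ v) {f : ℕ → ℝ}
    (hf : Summable fun i => f i ^ 2) (j : ℕ) :
    ⟪v j, ∑' i, f i • v i⟫ = f j := by
  classical
  rw [aux_inner_tsum hv hf]
  have h : (fun i => f i * ⟪v j, v i⟫) = fun i => if i = j then f j else 0 := by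
    funext i
    by_cases h : i = j
    · subst h; simp [orthonormal_iff_ite.mp hv i i, hv.1 i]
    · simp [orthonormal_iff_ite.mp hv j i, (Ne.symm h : j ≠ i), h]
  rw [h]
  exact tsum_ite_eq j (fun _ => f j)

private lemma aux_norm_sq {v : ℕ → E} (hv : Orthonormal ℝ v) {f : ℕ → ℝ}
    (hf : Summable fun i => f i ^ 2) :
    ‖∑' i, f i • v i‖ ^ 2 = ∑' i, f i ^ 2 := by
  rw [← real_inner_self_eq_norm_sq, aux_inner_tsum hv hf]
  refine tsum_congr fun i => ?_
  rw [real_inner_comm, aux_coeff hv hf i, sq]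

private lemma aux_parseval_summable (b : HilbertBasis ℕ ℝ E) (x : E) :
    Summable fun n => ⟪b n, x⟫ ^ 2 := by
  simpa [Real.norm_eq_abs, sq_abs] using b.orthonormal.inner_products_summable (x := x)

private lemma aux_parseval (b : HilbertBasis ℕ ℝ E) (x : E) :
    ∑' n, ⟪b n, x⟫ ^ 2 = ‖x‖ ^ 2 := by
  calc ∑' n, ⟪b n, x⟫ ^ 2 = ∑' n, ⟪x, b n⟫ * ⟪b n, x⟫ := by
        refine tsum_congr fun n => ?_
        rw [sq, real_inner_comm]
    _ = ⟪x, x⟫ := b.tsum_inner_mul_inner x x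
    _ = ‖x‖ ^ 2 := real_inner_self_eq_norm_sq x

end Helpers

/-- The core Hilbert–Schmidt error estimate for a hyperbolic-cross-type truncation:
if `Tc` keeps only the coefficients `(ℓ, k)` with `ℓ < L k`, and
`σU ℓ ^ 2 * σW k ^ 2 ≤ m k` on the discarded region, then the squared
Hilbert–Schmidt error is at most `(∑' k, m k) * ‖Dc‖ ^ 2`. -/
private lemma aux_error {Y Z U₀ V₀ : Type*}
    [NormedAddCommGroup Y] [InnerProductSpace ℝ Y] [CompleteSpace Y]
    [NormedAddCommGroup Z] [InnerProductSpace ℝ Z] [CompleteSpace Z]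
    [NormedAddCommGroup U₀] [InnerProductSpace ℝ U₀] [CompleteSpace U₀]
    [NormedAddCommGroup V₀] [InnerProductSpace ℝ V₀] [CompleteSpace V₀]
    (eY : HilbertBasis ℕ ℝ Y) (U : Y →L[ℝ] U₀) (W : V₀ →L[ℝ] Z)
    (Dc : U₀ →L[ℝ] V₀) (Tc : Y →L[ℝ] Z)
    (σU σW : ℕ → ℝ) (aU : ℕ → Y) (bU : ℕ → U₀) (aW : ℕ → V₀) (bW : ℕ → Z)
    (haU : Orthonormal ℝ aU) (hbU : Orthonormal ℝ bU)
    (haW : Orthonormal ℝ aW) (hbW : Orthonormal ℝ bW)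
    (hUrep : ∀ y : Y, U y = ∑' ℓ : ℕ, (σU ℓ * ⟪y, aU ℓ⟫) • bU ℓ)
    (hWrep : ∀ v : V₀, W v = ∑' k : ℕ, (σW k * ⟪v, aW k⟫) • bW k)
    (C : ℝ) (hσUC : ∀ ℓ, σU ℓ ^ 2 ≤ C ^ 2) (hσWC : ∀ k, σW k ^ 2 ≤ C ^ 2)
    (L : ℕ → ℕ) (K : ℕ) (hL0 : ∀ k, K ≤ k → L k = 0)
    (hTc : ∀ y : Y, Tc y = ∑ k ∈ Finset.range K, ∑ ℓ ∈ Finset.range (L k),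
        (σU ℓ * σW k * ⟪y, aU ℓ⟫ * ⟪Dc (bU ℓ), aW k⟫) • bW k)
    (m : ℕ → ℝ) (hm : ∀ k ℓ, L k ≤ ℓ → σU ℓ ^ 2 * σW k ^ 2 ≤ m k)
    (hmsum : Summable m) :
    ∑' n, ‖W (Dc (U (eY n))) - Tc (eY n)‖ ^ 2 ≤ (∑' k, m k) * ‖Dc‖ ^ 2 := by
  classical
  have hC2 : (0:ℝ) ≤ C ^ 2 := le_trans (sq_nonneg (σU 0)) (hσUC 0)
  have hm0 : ∀ k, 0 ≤ m k := fun k => le_trans (by positivity) (hm k (L k) le_rfl)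
  set d : ℕ → ℕ → ℝ := fun ℓ k => ⟪Dc (bU ℓ), aW k⟫ with hddef
  have hd_eq : ∀ ℓ k, d ℓ k = ⟪bU ℓ, (ContinuousLinearMap.adjoint Dc) (aW k)⟫ :=
    fun ℓ k => (ContinuousLinearMap.adjoint_inner_right Dc (bU ℓ) (aW k)).symm
  have hd_sum : ∀ k, Summable fun ℓ => d ℓ k ^ 2 := by
    intro k
    have := hbU.inner_products_summable (x := (ContinuousLinearMap.adjoint Dc) (aW k))
    refine this.congr fun ℓ => ?_
    rw [hd_eq ℓ k, Real.norm_eq_abs, sq_abs]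
  have hd_bound : ∀ k, ∑' ℓ, d ℓ k ^ 2 ≤ ‖Dc‖ ^ 2 := by
    intro k
    have h1 := hbU.tsum_inner_products_le ((ContinuousLinearMap.adjoint Dc) (aW k))
    have h2 : ‖(ContinuousLinearMap.adjoint Dc) (aW k)‖ ≤ ‖Dc‖ := by
      refine le_trans ((ContinuousLinearMap.adjoint Dc).le_opNorm (aW k)) ?_
      rw [haW.1 k, mul_one, ContinuousLinearMap.adjoint.norm_map]
    calc ∑' ℓ, d ℓ k ^ 2
        = ∑' ℓ, ‖⟪bU ℓ, (ContinuousLinearMap.adjoint Dc) (aW k)⟫‖ ^ 2 := by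
          refine tsum_congr fun ℓ => ?_
          rw [hd_eq ℓ k, Real.norm_eq_abs, sq_abs]
      _ ≤ ‖(ContinuousLinearMap.adjoint Dc) (aW k)‖ ^ 2 := h1
      _ ≤ ‖Dc‖ ^ 2 := pow_le_pow_left₀ (norm_nonneg _) h2 2
  have hbessel_y : ∀ y : Y, Summable fun ℓ => ⟪y, aU ℓ⟫ ^ 2 := by
    intro y
    have := haU.inner_products_summable (x := y)
    refine this.congr fun ℓ => ?_
    rw [Real.norm_eq_abs, sq_abs, real_inner_comm]
  -- U coefficients
  set f0 : Y → ℕ → ℝ := fun y ℓ => σU ℓ * ⟪y, aU ℓ⟫ with hf0def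
  have hf0sq : ∀ y, Summable fun ℓ => (f0 y ℓ) ^ 2 := by
    intro y
    refine Summable.of_nonneg_of_le (fun ℓ => sq_nonneg _) (fun ℓ => ?_)
      ((hbessel_y y).mul_left (C ^ 2))
    simp only [hf0def, mul_pow]
    exact mul_le_mul_of_nonneg_right (hσUC ℓ) (sq_nonneg _)
  have hUsum : ∀ y, Summable fun ℓ => (f0 y ℓ) • bU ℓ := fun y =>
    aux_summable_smul hbU (hf0sq y)
  have hfull : ∀ (y : Y) (k : ℕ), ⟪Dc (U y), aW k⟫ = ∑' ℓ, f0 y ℓ * d ℓ k := by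
    intro y k
    set Ψ : U₀ →L[ℝ] ℝ := (innerSL ℝ (aW k)).comp Dc with hΨdef
    calc ⟪Dc (U y), aW k⟫ = Ψ (U y) := by
          simp only [hΨdef, ContinuousLinearMap.comp_apply, innerSL_apply_apply]
          exact real_inner_comm _ _
      _ = ∑' ℓ, Ψ ((f0 y ℓ) • bU ℓ) := by rw [hUrep y]; exact Ψ.map_tsum (hUsum y)
      _ = ∑' ℓ, f0 y ℓ * d ℓ k := by
          refine tsum_congr fun ℓ => ?_
          simp only [hΨdef, map_smul, ContinuousLinearMap.comp_apply, innerSL_apply_apply,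
            smul_eq_mul, hddef]
          rw [real_inner_comm]
  have hfull_sq : ∀ y : Y, Summable fun k => (σW k * ⟪Dc (U y), aW k⟫) ^ 2 := by
    intro y
    have hb := haW.inner_products_summable (x := Dc (U y))
    refine Summable.of_nonneg_of_le (fun k => sq_nonneg _) (fun k => ?_)
      (hb.mul_left (C ^ 2))
    rw [mul_pow]
    have h2 : ‖⟪aW k, Dc (U y)⟫‖ ^ 2 = ⟪Dc (U y), aW k⟫ ^ 2 := by
      rw [Real.norm_eq_abs, sq_abs, real_inner_comm]
    rw [h2]
    exact mul_le_mul_of_nonneg_right (hσWC k) (sq_nonneg _)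
  -- truncated coefficients
  set xx : ℕ → ℕ → ℝ := fun ℓ k => if ℓ < L k then 0 else σU ℓ * d ℓ k with hxxdef
  have hxx_sq_le : ∀ k ℓ, (xx ℓ k) ^ 2 ≤ C ^ 2 * d ℓ k ^ 2 := by
    intro k ℓ
    by_cases h : ℓ < L k
    · simp only [hxxdef, if_pos h]
      norm_num
      positivity
    · simp only [hxxdef, if_neg h, mul_pow]
      exact mul_le_mul_of_nonneg_right (hσUC ℓ) (sq_nonneg _)
  have hxx_sum : ∀ k, Summable fun ℓ => (xx ℓ k) ^ 2 := fun k =>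
    Summable.of_nonneg_of_le (fun ℓ => sq_nonneg _) (hxx_sq_le k) ((hd_sum k).mul_left _)
  set g : ℕ → Y := fun k => ∑' ℓ, xx ℓ k • aU ℓ with hgdef
  have hg_norm : ∀ k, ‖g k‖ ^ 2 = ∑' ℓ, (xx ℓ k) ^ 2 := fun k =>
    aux_norm_sq haU (hxx_sum k)
  have hg_inner : ∀ (y : Y) (k : ℕ), ⟪y, g k⟫ = ∑' ℓ, xx ℓ k * ⟪y, aU ℓ⟫ := fun y k =>
    aux_inner_tsum haU (hxx_sum k) y
  -- the key per-row bound
  have hBk : ∀ k, σW k ^ 2 * ‖g k‖ ^ 2 ≤ m k * ‖Dc‖ ^ 2 := by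
    intro k
    have hpt : ∀ ℓ, σW k ^ 2 * (xx ℓ k) ^ 2 ≤ m k * d ℓ k ^ 2 := by
      intro ℓ
      by_cases h : ℓ < L k
      · simp only [hxxdef, if_pos h]
        have : (0:ℝ) ≤ m k * d ℓ k ^ 2 := mul_nonneg (hm0 k) (sq_nonneg _)
        simpa using this
      · simp only [hxxdef, if_neg h]
        push_neg at h
        have h1 := hm k ℓ h
        have : σW k ^ 2 * (σU ℓ * d ℓ k) ^ 2 = (σU ℓ ^ 2 * σW k ^ 2) * d ℓ k ^ 2 := by ring
        rw [this]
        exact mul_le_mul_of_nonneg_right h1 (sq_nonneg _)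
    have hs1 : Summable fun ℓ => σW k ^ 2 * (xx ℓ k) ^ 2 := (hxx_sum k).mul_left _
    have hs2 : Summable fun ℓ => m k * d ℓ k ^ 2 := (hd_sum k).mul_left _
    calc σW k ^ 2 * ‖g k‖ ^ 2 = ∑' ℓ, σW k ^ 2 * (xx ℓ k) ^ 2 := by
          rw [hg_norm k, tsum_mul_left]
      _ ≤ ∑' ℓ, m k * d ℓ k ^ 2 := Summable.tsum_le_tsum hpt hs1 hs2
      _ = m k * ∑' ℓ, d ℓ k ^ 2 := tsum_mul_left
      _ ≤ m k * ‖Dc‖ ^ 2 := mul_le_mul_of_nonneg_left (hd_bound k) (hm0 k)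
  have hgk_sum : Summable fun k => σW k ^ 2 * ‖g k‖ ^ 2 := by
    refine Summable.of_nonneg_of_le (fun k => by positivity) hBk (hmsum.mul_right _)
  -- head of the expansion
  set head : Y → ℕ → ℝ := fun y k => ∑ ℓ ∈ Finset.range (L k), f0 y ℓ * d ℓ k with hheaddef
  have hsplit : ∀ (y : Y) (k : ℕ), (∑' ℓ, f0 y ℓ * d ℓ k) = head y k + ⟪y, g k⟫ := by
    intro y k
    have hs1 : Summable (fun ℓ => if ℓ < L k then f0 y ℓ * d ℓ k else 0) := by
      refine summable_of_ne_finset_zero (s := Finset.range (L k)) ?_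
      intro ℓ hℓ
      rw [Finset.mem_range] at hℓ
      simp [hℓ]
    have hs2 : Summable (fun ℓ => xx ℓ k * ⟪y, aU ℓ⟫) :=
      aux_summable_mul (hxx_sum k) (hbessel_y y)
    have hpt : ∀ ℓ, f0 y ℓ * d ℓ k =
        (if ℓ < L k then f0 y ℓ * d ℓ k else 0) + xx ℓ k * ⟪y, aU ℓ⟫ := by
      intro ℓ
      by_cases h : ℓ < L k
      · simp [hxxdef, h]
      · simp only [hxxdef, if_neg h, hf0def]
        ring
    calc ∑' ℓ, f0 y ℓ * d ℓ k
        = ∑' ℓ, ((if ℓ < L k then f0 y ℓ * d ℓ k else 0) + xx ℓ k * ⟪y, aU ℓ⟫) :=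
          tsum_congr hpt
      _ = (∑' ℓ, if ℓ < L k then f0 y ℓ * d ℓ k else 0) + ∑' ℓ, xx ℓ k * ⟪y, aU ℓ⟫ :=
          Summable.tsum_add hs1 hs2
      _ = head y k + ⟪y, g k⟫ := by
          rw [hg_inner y k]
          congr 1
          rw [tsum_eq_sum (s := Finset.range (L k))
            (fun ℓ hℓ => by rw [Finset.mem_range] at hℓ; simp [hℓ])]
          exact Finset.sum_congr rfl fun ℓ hℓ => if_pos (Finset.mem_range.mp hℓ)
  have hTK2 : ∀ y : Y, Tc y = ∑' k, (σW k * head y k) • bW k := by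
    intro y
    rw [hTc y]
    rw [tsum_eq_sum (s := Finset.range K) (fun k hk => by
      have : L k = 0 := hL0 k (by simpa using hk)
      simp [hheaddef, this])]
    refine Finset.sum_congr rfl fun k _ => ?_
    rw [← Finset.sum_smul]
    congr 1
    simp only [hheaddef, Finset.mul_sum]
    refine Finset.sum_congr rfl fun ℓ _ => ?_
    simp only [hf0def, hddef]
    ring
  have hE : ∀ y : Y, W (Dc (U y)) - Tc y = ∑' k, (σW k * ⟪y, g k⟫) • bW k := by
    intro y
    rw [hWrep (Dc (U y)), hTK2 y]
    have hsum1 : Summable fun k => (σW k * ⟪Dc (U y), aW k⟫) • bW k :=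
      aux_summable_smul hbW (hfull_sq y)
    have hsum2 : Summable fun k => (σW k * head y k) • bW k := by
      refine summable_of_ne_finset_zero (s := Finset.range K) ?_
      intro k hk
      have : L k = 0 := hL0 k (by simpa using hk)
      simp [hheaddef, this]
    rw [← Summable.tsum_sub hsum1 hsum2]
    refine tsum_congr fun k => ?_
    rw [← sub_smul]
    congr 1
    rw [hfull y k, hsplit y k]
    ring
  have hcoef_sq : ∀ y : Y, Summable fun k => (σW k * ⟪y, g k⟫) ^ 2 := by
    intro y
    refine Summable.of_nonneg_of_le (fun k => sq_nonneg _) (fun k => ?_)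
      ((hmsum.mul_right (‖Dc‖ ^ 2)).mul_left (‖y‖ ^ 2))
    have hCS : ⟪y, g k⟫ ^ 2 ≤ ‖y‖ ^ 2 * ‖g k‖ ^ 2 := by
      have h0 := real_inner_mul_inner_self_le y (g k)
      rw [real_inner_self_eq_norm_sq, real_inner_self_eq_norm_sq] at h0
      rw [sq]
      exact h0
    have h1 : (σW k * ⟪y, g k⟫) ^ 2 ≤ ‖y‖ ^ 2 * (σW k ^ 2 * ‖g k‖ ^ 2) := by
      rw [mul_pow]
      calc σW k ^ 2 * ⟪y, g k⟫ ^ 2 ≤ σW k ^ 2 * (‖y‖ ^ 2 * ‖g k‖ ^ 2) :=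
            mul_le_mul_of_nonneg_left hCS (sq_nonneg _)
        _ = ‖y‖ ^ 2 * (σW k ^ 2 * ‖g k‖ ^ 2) := by ring
    exact le_trans h1 (mul_le_mul_of_nonneg_left (hBk k) (sq_nonneg _))
  have hEnorm : ∀ n, ‖W (Dc (U (eY n))) - Tc (eY n)‖ ^ 2 =
      ∑' k, (σW k * ⟪eY n, g k⟫) ^ 2 := by
    intro n
    rw [hE (eY n)]
    exact aux_norm_sq hbW (hcoef_sq (eY n))
  have hslice_n : ∀ k, Summable fun n => (σW k * ⟪eY n, g k⟫) ^ 2 := by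
    intro k
    refine ((aux_parseval_summable eY (g k)).mul_left (σW k ^ 2)).congr fun n => ?_
    rw [mul_pow]
  have hslice_val : ∀ k, ∑' n, (σW k * ⟪eY n, g k⟫) ^ 2 = σW k ^ 2 * ‖g k‖ ^ 2 := by
    intro k
    calc ∑' n, (σW k * ⟪eY n, g k⟫) ^ 2 = ∑' n, σW k ^ 2 * ⟪eY n, g k⟫ ^ 2 :=
          tsum_congr fun n => mul_pow _ _ _
      _ = σW k ^ 2 * ∑' n, ⟪eY n, g k⟫ ^ 2 := tsum_mul_left
      _ = σW k ^ 2 * ‖g k‖ ^ 2 := by rw [aux_parseval eY (g k)]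
  have hprod : Summable (Function.uncurry fun k n => (σW k * ⟪eY n, g k⟫) ^ 2) := by
    refine (summable_prod_of_nonneg fun q => sq_nonneg _).2 ⟨fun k => hslice_n k, ?_⟩
    refine hgk_sum.congr fun k => ?_
    exact (hslice_val k).symm
  calc ∑' n, ‖W (Dc (U (eY n))) - Tc (eY n)‖ ^ 2
      = ∑' n, ∑' k, (σW k * ⟪eY n, g k⟫) ^ 2 := tsum_congr hEnorm
    _ = ∑' k, ∑' n, (σW k * ⟪eY n, g k⟫) ^ 2 := Summable.tsum_comm hprod
    _ = ∑' k, σW k ^ 2 * ‖g k‖ ^ 2 := tsum_congr hslice_val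
    _ ≤ ∑' k, m k * ‖Dc‖ ^ 2 := Summable.tsum_le_tsum hBk hgk_sum (hmsum.mul_right _)
    _ = (∑' k, m k) * ‖Dc‖ ^ 2 := tsum_mul_right


/-- Construction of the truncation operator together with its pointwise formula
and a rank bound. -/
private lemma aux_TK {X Y Z U₀ V₀ : Type*}
    [NormedAddCommGroup X] [InnerProductSpace ℝ X]
    [NormedAddCommGroup Y] [InnerProductSpace ℝ Y]
    [NormedAddCommGroup Z] [InnerProductSpace ℝ Z]
    [NormedAddCommGroup U₀] [InnerProductSpace ℝ U₀]
    [NormedAddCommGroup V₀] [InnerProductSpace ℝ V₀]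
    (D : X →L[ℝ] (U₀ →L[ℝ] V₀)) (σU σW : ℕ → ℝ)
    (aU : ℕ → Y) (bU : ℕ → U₀) (aW : ℕ → V₀) (bW : ℕ → Z)
    (L : ℕ → ℕ) (K : ℕ) :
    ∃ TK : X →ₗ[ℝ] (Y →L[ℝ] Z),
      (∀ (c : X) (y : Y), TK c y = ∑ k ∈ Finset.range K, ∑ ℓ ∈ Finset.range (L k),
          (σU ℓ * σW k * ⟪y, aU ℓ⟫ * ⟪(D c) (bU ℓ), aW k⟫) • bW k) ∧
      Module.finrank ℝ (LinearMap.range TK) ≤ ∑ k ∈ Finset.range K, L k := by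
  classical
  set G : ℕ → ℕ → (Y →L[ℝ] Z) := fun ℓ k => (innerSL ℝ (aU ℓ)).smulRight (bW k) with hGdef
  set φ : ℕ → ℕ → (X →ₗ[ℝ] ℝ) := fun ℓ k =>
    (((innerSL ℝ (aW k)).comp (D.flip (bU ℓ))).toLinearMap) with hφdef
  set TK : X →ₗ[ℝ] (Y →L[ℝ] Z) :=
    ∑ k ∈ Finset.range K, ∑ ℓ ∈ Finset.range (L k),
      (φ ℓ k).smulRight ((σU ℓ * σW k) • G ℓ k) with hTKdef
  have hφval : ∀ ℓ k (c : X), φ ℓ k c = ⟪(D c) (bU ℓ), aW k⟫ := by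
    intro ℓ k c
    simp only [hφdef, ContinuousLinearMap.coe_coe, ContinuousLinearMap.comp_apply,
      ContinuousLinearMap.flip_apply, innerSL_apply_apply]
    exact real_inner_comm _ _
  have hTKc : ∀ c : X, TK c =
      ∑ k ∈ Finset.range K, ∑ ℓ ∈ Finset.range (L k),
        (⟪(D c) (bU ℓ), aW k⟫ * (σU ℓ * σW k)) • G ℓ k := by
    intro c
    simp only [hTKdef, LinearMap.coe_sum, Finset.sum_apply, LinearMap.smulRight_apply]
    refine Finset.sum_congr rfl fun k _ => Finset.sum_congr rfl fun ℓ _ => ?_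
    rw [hφval, smul_smul]
  refine ⟨TK, ?_, ?_⟩
  · intro c y
    rw [hTKc c]
    simp only [ContinuousLinearMap.coe_sum', Finset.sum_apply, ContinuousLinearMap.coe_smul',
      Pi.smul_apply, hGdef, ContinuousLinearMap.smulRight_apply, innerSL_apply_apply]
    refine Finset.sum_congr rfl fun k _ => Finset.sum_congr rfl fun ℓ _ => ?_
    rw [smul_smul]
    congr 1
    rw [real_inner_comm (aU ℓ) y]
    ring
  · set Gset : Finset (Y →L[ℝ] Z) :=
      (Finset.range K).biUnion (fun k => (Finset.range (L k)).image (fun ℓ => G ℓ k))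
      with hGsetdef
    have hsub : LinearMap.range TK ≤ Submodule.span ℝ (Gset : Set (Y →L[ℝ] Z)) := by
      rintro - ⟨c, rfl⟩
      rw [hTKc c]
      refine Submodule.sum_mem _ fun k hk => Submodule.sum_mem _ fun ℓ hℓ => ?_
      refine Submodule.smul_mem _ _ (Submodule.subset_span ?_)
      simp only [hGsetdef, Finset.coe_biUnion, Finset.coe_image, Set.mem_iUnion]
      exact ⟨k, hk, Set.mem_image_of_mem _ (by simpa using hℓ)⟩
    haveI : FiniteDimensional ℝ (Submodule.span ℝ (Gset : Set (Y →L[ℝ] Z))) :=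
      FiniteDimensional.span_of_finite ℝ (Gset.finite_toSet)
    have h1 : Module.finrank ℝ (LinearMap.range TK) ≤
        Module.finrank ℝ (Submodule.span ℝ (Gset : Set (Y →L[ℝ] Z))) :=
      Submodule.finrank_mono hsub
    have h2 : Module.finrank ℝ (Submodule.span ℝ (Gset : Set (Y →L[ℝ] Z))) ≤ Gset.card :=
      finrank_span_finset_le_card Gset
    have h3 : Gset.card ≤ ∑ k ∈ Finset.range K, L k := by
      refine le_trans (Finset.card_biUnion_le) ?_
      exact Finset.sum_le_sum fun k _ => le_trans (Finset.card_image_le) (by simp)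
    exact le_trans h1 (le_trans h2 h3)

/-- Hyperbolic-cross low-rank approximation of `T(c) = V'∘D(c)∘U` (with `Z' ≅ Z` and
`V₀' ≅ V₀` identified via Riesz, so that `V'` becomes an operator `W : V₀ → Z`). If the
singular values satisfy `σ_{ℓ,U} ≤ C (ℓ+1)^(-β)` and `σ_{k,W} ≤ C (k+1)^(-α)` with `β > 1/2`
and `α > β + 1/2`, then for every `δ > 0` there is a hyperbolic-cross truncation `T_K̂`,
built from the singular systems of `U` and `W` with `L_k = ⌊K̂/k^(1+ε)⌋`,
`ε = (α−β−1/2)/(2β)`, of rank `≲ δ^(-1/β)` with `‖T − T_K̂‖_{L(X,HS(Y,Z'))} ≤ C'·δ`. -/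
theorem stmt9
    {X Y Z U₀ V₀ : Type*}
    [NormedAddCommGroup X] [InnerProductSpace ℝ X] [CompleteSpace X]
    [NormedAddCommGroup Y] [InnerProductSpace ℝ Y] [CompleteSpace Y]
    [NormedAddCommGroup Z] [InnerProductSpace ℝ Z] [CompleteSpace Z]
    [NormedAddCommGroup U₀] [InnerProductSpace ℝ U₀] [CompleteSpace U₀]
    [NormedAddCommGroup V₀] [InnerProductSpace ℝ V₀] [CompleteSpace V₀]
    (eY : HilbertBasis ℕ ℝ Y)
    (U : Y →L[ℝ] U₀) (W : V₀ →L[ℝ] Z) (D : X →L[ℝ] (U₀ →L[ℝ] V₀))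
    (σU σW : ℕ → ℝ) (aU : ℕ → Y) (bU : ℕ → U₀) (aW : ℕ → V₀) (bW : ℕ → Z)
    (haU : Orthonormal ℝ aU) (hbU : Orthonormal ℝ bU)
    (haW : Orthonormal ℝ aW) (hbW : Orthonormal ℝ bW)
    (hσUpos : ∀ ℓ, 0 ≤ σU ℓ) (hσWpos : ∀ k, 0 ≤ σW k)
    (hUrep : ∀ y : Y, U y = ∑' ℓ : ℕ, (σU ℓ * ⟪y, aU ℓ⟫) • bU ℓ)
    (hWrep : ∀ v : V₀, W v = ∑' k : ℕ, (σW k * ⟪v, aW k⟫) • bW k)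
    (α β C : ℝ) (hβ : 1/2 < β) (hα : β + 1/2 < α) (hC : 0 < C)
    (hσU : ∀ ℓ : ℕ, σU ℓ ≤ C * ((ℓ : ℝ) + 1) ^ (-β))
    (hσW : ∀ k : ℕ, σW k ≤ C * ((k : ℝ) + 1) ^ (-α)) :
    ∃ C' : ℝ, 0 < C' ∧ ∀ δ : ℝ, 0 < δ → ∃ Khat : ℕ,
      (Khat : ℝ) ≤ C' * δ ^ (-(1/β)) ∧
      ∃ TK : X →ₗ[ℝ] (Y →L[ℝ] Z),
        (Module.finrank ℝ (LinearMap.range TK) : ℝ) ≤ C' * δ ^ (-(1/β)) ∧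
        (∀ (c : X) (y : Y), TK c y =
          ∑' k : ℕ, ∑ ℓ ∈ Finset.range
              (⌊(Khat : ℝ) / ((k : ℝ) + 1) ^ (1 + (α - β - 1/2) / (2*β))⌋₊),
            (σU ℓ * σW k * ⟪y, aU ℓ⟫ * ⟪(D c) (bU ℓ), aW k⟫) • bW k) ∧
        ∀ c : X,
          Real.sqrt (∑' n, ‖W ((D c) (U (eY n))) - TK c (eY n)‖ ^ 2) ≤ C' * δ * ‖c‖ := by
  classical
  have hβ0 : 0 < β := by linarith
  have hα0 : 0 < α := by linarith
  set p : ℝ := 1 + (α - β - 1/2) / (2*β) with hpdef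
  have hp1 : 1 < p := by
    have : 0 < (α - β - 1/2) / (2*β) := div_pos (by linarith) (by linarith)
    simp only [hpdef]; linarith
  have hpmul : 2 * β * p = 2 * β + (α - β - 1/2) := by
    rw [hpdef]
    field_simp
  -- summable reference series
  have hSζsum : Summable fun k : ℕ => ((k : ℝ) + 1) ^ (-p) := aux_rpow_summable hp1
  have hS1sum : Summable fun k : ℕ => ((k : ℝ) + 1) ^ (-(α - β + 1/2)) :=
    aux_rpow_summable (by linarith)
  have hS0sum : Summable fun k : ℕ => ((k : ℝ) + 1) ^ (-(2*α)) :=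
    aux_rpow_summable (by linarith)
  set Sζ : ℝ := ∑' k : ℕ, ((k : ℝ) + 1) ^ (-p) with hSζdef
  set S1 : ℝ := ∑' k : ℕ, ((k : ℝ) + 1) ^ (-(α - β + 1/2)) with hS1def
  set S0 : ℝ := ∑' k : ℕ, ((k : ℝ) + 1) ^ (-(2*α)) with hS0def
  have hSζ0 : 0 ≤ Sζ := tsum_nonneg fun k => Real.rpow_nonneg (by positivity) _
  have hS10 : 0 ≤ S1 := tsum_nonneg fun k => Real.rpow_nonneg (by positivity) _
  have hS00 : 0 ≤ S0 := tsum_nonneg fun k => Real.rpow_nonneg (by positivity) _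
  set A1 : ℝ := C ^ 2 * ‖D‖ * Real.sqrt S1 * (2:ℝ) ^ (2*β) with hA1def
  set A2 : ℝ := C ^ 2 * ‖D‖ * Real.sqrt S0 with hA2def
  have hA10 : 0 ≤ A1 := by positivity
  have hA20 : 0 ≤ A2 := by positivity
  set C' : ℝ := max (max 1 Sζ) (max A1 A2) with hC'def
  have hC'1 : 1 ≤ C' := le_trans (le_max_left 1 Sζ) (le_max_left _ _)
  have hC'Sζ : Sζ ≤ C' := le_trans (le_max_right 1 Sζ) (le_max_left _ _)
  have hC'A1 : A1 ≤ C' := le_trans (le_max_left A1 A2) (le_max_right _ _)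
  have hC'A2 : A2 ≤ C' := le_trans (le_max_right A1 A2) (le_max_right _ _)
  have hC'0 : 0 < C' := lt_of_lt_of_le one_pos hC'1
  refine ⟨C', hC'0, ?_⟩
  intro δ hδ
  set x : ℝ := δ ^ (-(1/β)) with hxdef
  have hx0 : 0 < x := Real.rpow_pos_of_pos hδ _
  set Khat : ℕ := ⌊x⌋₊ with hKdef
  have hKle : (Khat : ℝ) ≤ x := Nat.floor_le hx0.le
  refine ⟨Khat, le_trans hKle (le_mul_of_one_le_left hx0.le hC'1), ?_⟩
  -- the per-row truncation lengths
  set L : ℕ → ℕ := fun k => ⌊(Khat : ℝ) / ((k : ℝ) + 1) ^ p⌋₊ with hLdef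
  have hk1pos : ∀ k : ℕ, (0:ℝ) < ((k : ℝ) + 1) ^ p := fun k =>
    Real.rpow_pos_of_pos (by positivity) _
  have hL0 : ∀ k : ℕ, Khat ≤ k → L k = 0 := by
    intro k hk
    have h1 : (Khat : ℝ) < ((k : ℝ) + 1) ^ p := by
      have h2 : ((k : ℝ) + 1) ^ (1:ℝ) ≤ ((k : ℝ) + 1) ^ p :=
        Real.rpow_le_rpow_of_exponent_le (by push_cast; linarith [Nat.cast_nonneg (α := ℝ) k])
          hp1.le
      rw [Real.rpow_one] at h2
      have : (Khat : ℝ) ≤ (k : ℝ) := by exact_mod_cast hk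
      linarith
    simp only [hLdef]
    rw [Nat.floor_eq_zero, div_lt_one (hk1pos k)]
    exact h1
  -- σ bounds
  have hσUC : ∀ ℓ, σU ℓ ^ 2 ≤ C ^ 2 := by
    intro ℓ
    have h1 : ((ℓ : ℝ) + 1) ^ (-β) ≤ 1 :=
      Real.rpow_le_one_of_one_le_of_nonpos (by push_cast; linarith [Nat.cast_nonneg (α := ℝ) ℓ])
        (by linarith)
    have h2 : σU ℓ ≤ C := le_trans (hσU ℓ) (mul_le_of_le_one_right hC.le h1)
    exact pow_le_pow_left₀ (hσUpos ℓ) h2 2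
  have hσWC : ∀ k, σW k ^ 2 ≤ C ^ 2 := by
    intro k
    have h1 : ((k : ℝ) + 1) ^ (-α) ≤ 1 :=
      Real.rpow_le_one_of_one_le_of_nonpos (by push_cast; linarith [Nat.cast_nonneg (α := ℝ) k])
        (by linarith)
    have h2 : σW k ≤ C := le_trans (hσW k) (mul_le_of_le_one_right hC.le h1)
    exact pow_le_pow_left₀ (hσWpos k) h2 2
  have hσUsq : ∀ ℓ, σU ℓ ^ 2 ≤ C ^ 2 * ((ℓ : ℝ) + 1) ^ (-(2*β)) := by
    intro ℓ
    have h1 : σU ℓ ^ 2 ≤ (C * ((ℓ : ℝ) + 1) ^ (-β)) ^ 2 :=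
      pow_le_pow_left₀ (hσUpos ℓ) (hσU ℓ) 2
    rw [mul_pow, aux_sq_rpow (by positivity) (-β)] at h1
    calc σU ℓ ^ 2 ≤ C ^ 2 * ((ℓ:ℝ)+1) ^ (2 * -β) := h1
      _ = C ^ 2 * ((ℓ:ℝ)+1) ^ (-(2*β)) := by ring_nf
  have hσWsq : ∀ k, σW k ^ 2 ≤ C ^ 2 * ((k : ℝ) + 1) ^ (-(2*α)) := by
    intro k
    have h1 : σW k ^ 2 ≤ (C * ((k : ℝ) + 1) ^ (-α)) ^ 2 :=
      pow_le_pow_left₀ (hσWpos k) (hσW k) 2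
    rw [mul_pow, aux_sq_rpow (by positivity) (-α)] at h1
    calc σW k ^ 2 ≤ C ^ 2 * ((k:ℝ)+1) ^ (2 * -α) := h1
      _ = C ^ 2 * ((k:ℝ)+1) ^ (-(2*α)) := by ring_nf
  obtain ⟨TK, hTKapply, hrankN⟩ := aux_TK D σU σW aU bU aW bW L Khat
  refine ⟨TK, ?_, ?_, ?_⟩
  · -- rank bound
    have h4 : ((∑ k ∈ Finset.range Khat, L k : ℕ) : ℝ) ≤ Sζ * Khat := by
      push_cast
      have h5 : ∀ k ∈ Finset.range Khat, (L k : ℝ) ≤ (Khat : ℝ) * ((k : ℝ) + 1) ^ (-p) := by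
        intro k _
        have h6 := Nat.floor_le (a := (Khat : ℝ) / ((k : ℝ) + 1) ^ p) (by positivity)
        refine le_trans h6 ?_
        rw [div_eq_mul_inv, Real.rpow_neg (by positivity)]
      refine le_trans (Finset.sum_le_sum h5) ?_
      rw [← Finset.mul_sum, mul_comm]
      refine mul_le_mul_of_nonneg_right ?_ (Nat.cast_nonneg Khat)
      exact Summable.sum_le_tsum _ (fun k _ => Real.rpow_nonneg (by positivity) _) hSζsum
    have h6 : (Module.finrank ℝ (LinearMap.range TK) : ℝ) ≤ Sζ * Khat := by
      refine le_trans ?_ h4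
      exact_mod_cast hrankN
    exact le_trans h6 (mul_le_mul hC'Sζ hKle (Nat.cast_nonneg _) hC'0.le)
  · -- formula
    intro c y
    rw [hTKapply c y]
    refine (tsum_eq_sum ?_).symm
    intro k hk
    rw [hL0 k (by simpa using hk)]
    simp
  · -- error bound
    intro c
    have hDcB : ‖D c‖ ≤ ‖D‖ * ‖c‖ := D.le_opNorm c
    have hDcB2 : ‖D c‖ ^ 2 ≤ ‖D‖ ^ 2 * ‖c‖ ^ 2 := by
      rw [← mul_pow]
      exact pow_le_pow_left₀ (norm_nonneg _) hDcB 2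
    have hnn : 0 ≤ C' * δ * ‖c‖ := by positivity
    have hsqrt : (∑' n, ‖W ((D c) (U (eY n))) - TK c (eY n)‖ ^ 2) ≤ (C' * δ * ‖c‖) ^ 2 →
        Real.sqrt (∑' n, ‖W ((D c) (U (eY n))) - TK c (eY n)‖ ^ 2) ≤ C' * δ * ‖c‖ := by
      intro h1
      calc Real.sqrt (∑' n, ‖W ((D c) (U (eY n))) - TK c (eY n)‖ ^ 2)
          ≤ Real.sqrt ((C' * δ * ‖c‖) ^ 2) := Real.sqrt_le_sqrt h1
        _ = C' * δ * ‖c‖ := Real.sqrt_sq hnn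
    have h2pow1 : 1 ≤ (2:ℝ) ^ (2*β) := by
      have h := Real.rpow_le_rpow_of_exponent_le (by norm_num : (1:ℝ) ≤ 2)
        (show (0:ℝ) ≤ 2*β by linarith)
      rwa [Real.rpow_zero] at h
    have h2b0 : (0:ℝ) ≤ (2:ℝ) ^ (2*β) := by linarith
    rcases le_or_gt δ 1 with hδ1 | hδ1
    · -- small δ : Khat ≥ 1, hyperbolic-cross decay
      have hx1 : 1 ≤ x := Real.one_le_rpow_of_pos_of_le_one_of_nonpos hδ hδ1 (by
        have h0 : 0 < 1/β := by positivity
        linarith)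
      have hK1 : 1 ≤ Khat := Nat.le_floor (by exact_mod_cast hx1)
      have hKpos : (0:ℝ) < Khat := by exact_mod_cast hK1
      have hKx : x / 2 ≤ (Khat : ℝ) := by
        rcases le_or_gt x 2 with h | h
        · have : x / 2 ≤ 1 := by linarith
          exact le_trans this (by exact_mod_cast hK1)
        · have h2 := Nat.lt_floor_add_one x
          have h3 : x - 1 < (Khat : ℝ) := by
            simp only [hKdef]
            push_cast
            linarith
          linarith
      have hKinv : ((Khat : ℝ)) ^ (-(2*β)) ≤ (2:ℝ) ^ (2*β) * δ ^ 2 := by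
        have hx20 : 0 < x / 2 := by linarith
        have h1 : ((Khat : ℝ)) ^ (-(2*β)) ≤ (x / 2) ^ (-(2*β)) :=
          Real.rpow_le_rpow_of_nonpos hx20 hKx (by linarith)
        have h2 : (x / 2) ^ (-(2*β)) = x ^ (-(2*β)) * (2:ℝ) ^ (2*β) := by
          rw [Real.div_rpow hx0.le (by norm_num : (0:ℝ) ≤ 2),
            Real.rpow_neg (by norm_num : (0:ℝ) ≤ 2) (2*β), div_eq_mul_inv, inv_inv]
        have h3 : x ^ (-(2*β)) = δ ^ 2 := by
          rw [hxdef, ← Real.rpow_natCast δ 2, ← Real.rpow_mul hδ.le]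
          congr 1
          push_cast
          field_simp
        rw [h2, h3] at h1
        linarith
      have hKey : ∀ k ℓ, L k ≤ ℓ →
          ((ℓ : ℝ) + 1) ^ (-(2*β)) ≤
            (2:ℝ) ^ (2*β) * δ ^ 2 * (((k : ℝ) + 1) ^ p) ^ (2*β) := by
        intro k ℓ hℓ
        set t : ℝ := (Khat : ℝ) / ((k : ℝ) + 1) ^ p with htdef
        have ht0 : 0 < t := div_pos hKpos (hk1pos k)
        have htℓ : t < (ℓ : ℝ) + 1 := by
          have h1 : t < (L k : ℝ) + 1 := by
            have hh := Nat.lt_floor_add_one t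
            have hLk : L k = ⌊t⌋₊ := rfl
            rw [hLk]
            exact_mod_cast hh
          have h2 : (L k : ℝ) ≤ (ℓ : ℝ) := by exact_mod_cast hℓ
          linarith
        have h3 : ((ℓ : ℝ) + 1) ^ (-(2*β)) ≤ t ^ (-(2*β)) :=
          Real.rpow_le_rpow_of_nonpos ht0 htℓ.le (by linarith)
        have h4 : t ^ (-(2*β)) = (Khat : ℝ) ^ (-(2*β)) * (((k:ℝ)+1) ^ p) ^ (2*β) := by
          rw [htdef, Real.div_rpow hKpos.le (hk1pos k).le,
            Real.rpow_neg (hk1pos k).le (2*β), div_eq_mul_inv, inv_inv]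
        have h5 : (0:ℝ) ≤ (((k:ℝ)+1) ^ p) ^ (2*β) := Real.rpow_nonneg (hk1pos k).le _
        calc ((ℓ : ℝ) + 1) ^ (-(2*β)) ≤ t ^ (-(2*β)) := h3
          _ = (Khat : ℝ) ^ (-(2*β)) * (((k:ℝ)+1) ^ p) ^ (2*β) := h4
          _ ≤ ((2:ℝ) ^ (2*β) * δ ^ 2) * (((k:ℝ)+1) ^ p) ^ (2*β) :=
              mul_le_mul_of_nonneg_right hKinv h5
          _ = (2:ℝ) ^ (2*β) * δ ^ 2 * (((k : ℝ) + 1) ^ p) ^ (2*β) := by ring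
      -- the majorant
      set m : ℕ → ℝ := fun k =>
        (C ^ 2 * C ^ 2 * ((2:ℝ) ^ (2*β) * δ ^ 2)) * ((k : ℝ) + 1) ^ (-(α - β + 1/2))
        with hmdef
      have hm : ∀ k ℓ, L k ≤ ℓ → σU ℓ ^ 2 * σW k ^ 2 ≤ m k := by
        intro k ℓ hℓ
        have h1 := hσUsq ℓ
        have h2 := hσWsq k
        have h3 := hKey k ℓ hℓ
        have h6 : σU ℓ ^ 2 * σW k ^ 2 ≤
            (C ^ 2 * ((ℓ:ℝ)+1) ^ (-(2*β))) * (C ^ 2 * ((k:ℝ)+1) ^ (-(2*α))) :=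
          mul_le_mul h1 h2 (sq_nonneg _) (by positivity)
        refine le_trans h6 ?_
        have h7 : (C ^ 2 * ((ℓ:ℝ)+1) ^ (-(2*β))) * (C ^ 2 * ((k:ℝ)+1) ^ (-(2*α))) ≤
            (C ^ 2 * ((2:ℝ) ^ (2*β) * δ ^ 2 * (((k:ℝ)+1) ^ p) ^ (2*β))) *
              (C ^ 2 * ((k:ℝ)+1) ^ (-(2*α))) := by
          refine mul_le_mul_of_nonneg_right ?_ ?_
          · exact mul_le_mul_of_nonneg_left h3 (by positivity)
          · have : (0:ℝ) ≤ ((k:ℝ)+1) ^ (-(2*α)) := Real.rpow_nonneg (by positivity) _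
            positivity
        refine le_trans h7 (le_of_eq ?_)
        have hr1 : (((k:ℝ)+1) ^ p) ^ (2*β) = ((k:ℝ)+1) ^ (p * (2*β)) :=
          (Real.rpow_mul (by positivity) p (2*β)).symm
        have hr2 : ((k:ℝ)+1) ^ (p * (2*β)) * ((k:ℝ)+1) ^ (-(2*α)) =
            ((k:ℝ)+1) ^ (p * (2*β) + -(2*α)) :=
          (Real.rpow_add (by positivity) _ _).symm
        have hexp : p * (2*β) + -(2*α) = -(α - β + 1/2) := by
          have h8 : p * (2*β) = 2 * β * p := by ring
          rw [h8, hpmul]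
          ring
        simp only [hmdef, hr1]
        rw [show (C ^ 2 * ((2:ℝ) ^ (2*β) * δ ^ 2 * ((k:ℝ)+1) ^ (p * (2*β)))) *
            (C ^ 2 * ((k:ℝ)+1) ^ (-(2*α))) =
            (C ^ 2 * C ^ 2 * ((2:ℝ) ^ (2*β) * δ ^ 2)) *
            (((k:ℝ)+1) ^ (p * (2*β)) * ((k:ℝ)+1) ^ (-(2*α))) from by ring]
        rw [hr2, hexp]
      have hmsum : Summable m := hS1sum.mul_left _
      have herr := aux_error eY U W (D c) (TK c) σU σW aU bU aW bW haU hbU haW hbW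
        hUrep hWrep C hσUC hσWC L Khat hL0 (fun y => hTKapply c y) m hm hmsum
      have hmtsum : (∑' k, m k) = (C ^ 2 * C ^ 2 * ((2:ℝ) ^ (2*β) * δ ^ 2)) * S1 := by
        simp only [hmdef]
        rw [tsum_mul_left]
      have hfin : (∑' k, m k) * ‖D c‖ ^ 2 ≤ (C' * δ * ‖c‖) ^ 2 := by
        rw [hmtsum]
        have hA1sq : A1 ^ 2 = C ^ 2 * C ^ 2 * ‖D‖ ^ 2 * S1 * ((2:ℝ) ^ (2*β)) ^ 2 := by
          simp only [hA1def]
          rw [mul_pow, mul_pow, mul_pow, Real.sq_sqrt hS10]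
          ring
        have hstep1 : (C ^ 2 * C ^ 2 * ((2:ℝ) ^ (2*β) * δ ^ 2)) * S1 * ‖D c‖ ^ 2 ≤
            (C ^ 2 * C ^ 2 * ((2:ℝ) ^ (2*β) * δ ^ 2)) * S1 * (‖D‖ ^ 2 * ‖c‖ ^ 2) :=
          mul_le_mul_of_nonneg_left hDcB2 (by positivity)
        have heq1 : (C ^ 2 * C ^ 2 * ((2:ℝ) ^ (2*β) * δ ^ 2)) * S1 * (‖D‖ ^ 2 * ‖c‖ ^ 2) =
            (C ^ 2 * C ^ 2 * ‖D‖ ^ 2 * S1 * (2:ℝ) ^ (2*β)) * δ ^ 2 * ‖c‖ ^ 2 := by ring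
        have hstep2 : (C ^ 2 * C ^ 2 * ‖D‖ ^ 2 * S1 * (2:ℝ) ^ (2*β)) * δ ^ 2 * ‖c‖ ^ 2 ≤
            (C ^ 2 * C ^ 2 * ‖D‖ ^ 2 * S1 * ((2:ℝ) ^ (2*β)) ^ 2) * δ ^ 2 * ‖c‖ ^ 2 := by
          have ht : (2:ℝ) ^ (2*β) ≤ ((2:ℝ) ^ (2*β)) ^ 2 := by
            rw [sq]
            exact le_mul_of_one_le_left h2b0 h2pow1
          have hmono : C ^ 2 * C ^ 2 * ‖D‖ ^ 2 * S1 * (2:ℝ) ^ (2*β) ≤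
              C ^ 2 * C ^ 2 * ‖D‖ ^ 2 * S1 * ((2:ℝ) ^ (2*β)) ^ 2 :=
            mul_le_mul_of_nonneg_left ht (by positivity)
          exact mul_le_mul_of_nonneg_right
            (mul_le_mul_of_nonneg_right hmono (sq_nonneg δ)) (sq_nonneg _)
        have hA1C2 : A1 ^ 2 ≤ C' ^ 2 := pow_le_pow_left₀ hA10 hC'A1 2
        have hstep3 : (C ^ 2 * C ^ 2 * ‖D‖ ^ 2 * S1 * ((2:ℝ) ^ (2*β)) ^ 2) * δ ^ 2 * ‖c‖ ^ 2 ≤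
            C' ^ 2 * δ ^ 2 * ‖c‖ ^ 2 := by
          rw [← hA1sq]
          exact mul_le_mul_of_nonneg_right
            (mul_le_mul_of_nonneg_right hA1C2 (sq_nonneg δ)) (sq_nonneg _)
        have heq2 : (C' * δ * ‖c‖) ^ 2 = C' ^ 2 * δ ^ 2 * ‖c‖ ^ 2 := by ring
        rw [heq2]
        linarith [hstep1, heq1 ▸ hstep1]
      exact hsqrt (le_trans herr hfin)
    · -- large δ : crude bound
      set m : ℕ → ℝ := fun k => (C ^ 2 * C ^ 2) * ((k : ℝ) + 1) ^ (-(2*α)) with hmdef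
      have hm : ∀ k ℓ, L k ≤ ℓ → σU ℓ ^ 2 * σW k ^ 2 ≤ m k := by
        intro k ℓ _
        have h6 : σU ℓ ^ 2 * σW k ^ 2 ≤ C ^ 2 * (C ^ 2 * ((k:ℝ)+1) ^ (-(2*α))) :=
          mul_le_mul (hσUC ℓ) (hσWsq k) (sq_nonneg _) (sq_nonneg C)
        refine le_trans h6 (le_of_eq ?_)
        simp only [hmdef]
        ring
      have hmsum : Summable m := hS0sum.mul_left _
      have herr := aux_error eY U W (D c) (TK c) σU σW aU bU aW bW haU hbU haW hbW
        hUrep hWrep C hσUC hσWC L Khat hL0 (fun y => hTKapply c y) m hm hmsum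
      have hmtsum : (∑' k, m k) = (C ^ 2 * C ^ 2) * S0 := by
        simp only [hmdef]
        rw [tsum_mul_left]
      have hfin : (∑' k, m k) * ‖D c‖ ^ 2 ≤ (C' * δ * ‖c‖) ^ 2 := by
        rw [hmtsum]
        have hA2sq : A2 ^ 2 = C ^ 2 * C ^ 2 * ‖D‖ ^ 2 * S0 := by
          simp only [hA2def]
          rw [mul_pow, mul_pow, Real.sq_sqrt hS00]
          ring
        have hδ2 : 1 ≤ δ ^ 2 := by
          calc (1:ℝ) = 1 * 1 := by ring
            _ ≤ δ * δ := mul_le_mul hδ1.le hδ1.le zero_le_one (by linarith)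
            _ = δ ^ 2 := (sq δ).symm
        have hstep1 : (C ^ 2 * C ^ 2) * S0 * ‖D c‖ ^ 2 ≤
            (C ^ 2 * C ^ 2) * S0 * (‖D‖ ^ 2 * ‖c‖ ^ 2) :=
          mul_le_mul_of_nonneg_left hDcB2 (by positivity)
        have heq1 : (C ^ 2 * C ^ 2) * S0 * (‖D‖ ^ 2 * ‖c‖ ^ 2) = A2 ^ 2 * ‖c‖ ^ 2 := by
          rw [hA2sq]; ring
        have hstep2 : A2 ^ 2 * ‖c‖ ^ 2 ≤ A2 ^ 2 * δ ^ 2 * ‖c‖ ^ 2 := by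
          calc A2 ^ 2 * ‖c‖ ^ 2 = (A2 ^ 2 * 1) * ‖c‖ ^ 2 := by ring
            _ ≤ (A2 ^ 2 * δ ^ 2) * ‖c‖ ^ 2 := mul_le_mul_of_nonneg_right
                (mul_le_mul_of_nonneg_left hδ2 (sq_nonneg A2)) (sq_nonneg _)
        have hA2C2 : A2 ^ 2 ≤ C' ^ 2 := pow_le_pow_left₀ hA20 hC'A2 2
        have hstep3 : A2 ^ 2 * δ ^ 2 * ‖c‖ ^ 2 ≤ C' ^ 2 * δ ^ 2 * ‖c‖ ^ 2 :=
          mul_le_mul_of_nonneg_right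
            (mul_le_mul_of_nonneg_right hA2C2 (sq_nonneg δ)) (sq_nonneg _)
        have heq2 : (C' * δ * ‖c‖) ^ 2 = C' ^ 2 * δ ^ 2 * ‖c‖ ^ 2 := by ring
        rw [heq2]
        linarith [hstep1, heq1 ▸ hstep1]
      exact hsqrt (le_trans herr hfin)
end

section
/- Quasi-optimal recompression: let T be compact with truncated SVD rank N^svd such that σ_{N^svd+1}(T) ≤ δ, and let T^δ be compact with ‖T^δ − T‖ ≤ Cδ. If P^δ_{N^δ} T^δ is the truncated SVD of T^δ with minimal rank N^δ such that ‖T^δ − P^δ_{N^δ}T^δ‖ ≤ (C+1)δ, then N^δ ≤ N^svd and ‖T − P^δ_{N^δ}T^δ‖ ≤ (2C+1)δ. -/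
/-- The `(k+1)`-st singular value (approximation number) of a bounded operator. -/
noncomputable def approxNum {A B : Type*} [NormedAddCommGroup A] [NormedSpace ℝ A]
    [NormedAddCommGroup B] [NormedSpace ℝ B] (S : A →L[ℝ] B) (k : ℕ) : ℝ :=
  ⨅ R : {R : A →L[ℝ] B // Module.finrank ℝ (LinearMap.range R.toLinearMap) ≤ k}, ‖S - R.1‖

lemma approxNum_le_approxNum_add {A B : Type*} [NormedAddCommGroup A] [NormedSpace ℝ A]
    [NormedAddCommGroup B] [NormedSpace ℝ B] (S S' : A →L[ℝ] B) (k : ℕ) :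
    approxNum S' k ≤ approxNum S k + ‖S' - S‖ := by
  have hne : Nonempty {R : A →L[ℝ] B // Module.finrank ℝ (LinearMap.range R.toLinearMap) ≤ k} :=
    ⟨⟨0, by rw [ContinuousLinearMap.coe_zero, LinearMap.range_zero, finrank_bot]; exact k.zero_le⟩⟩
  have hbdd : BddBelow (Set.range fun R :
      {R : A →L[ℝ] B // Module.finrank ℝ (LinearMap.range R.toLinearMap) ≤ k} => ‖S' - R.1‖) :=
    ⟨0, by rintro x ⟨R, rfl⟩; positivity⟩
  rw [← sub_le_iff_le_add]
  apply le_ciInf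
  intro R
  have h1 : approxNum S' k ≤ ‖S' - R.1‖ := ciInf_le hbdd R
  have h2 : ‖S' - R.1‖ ≤ ‖S - R.1‖ + ‖S' - S‖ := by
    calc ‖S' - R.1‖ = ‖(S' - S) + (S - R.1)‖ := by rw [sub_add_sub_cancel]
      _ ≤ ‖S' - S‖ + ‖S - R.1‖ := norm_add_le _ _
      _ = ‖S - R.1‖ + ‖S' - S‖ := by ring
  linarith

/-- Quasi-optimal recompression: let `T` be compact with `σ_{Nsvd+1}(T) ≤ δ`, and let `T^δ`
be compact with `‖T^δ − T‖ ≤ Cδ`. If `TN` is the truncated SVD of `T^δ` with minimal rank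
`Nδ` such that `‖T^δ − TN‖ ≤ (C+1)δ`, then `Nδ ≤ Nsvd` and `‖T − TN‖ ≤ (2C+1)δ`. -/
theorem stmt11
    {A B : Type*} [NormedAddCommGroup A] [InnerProductSpace ℝ A] [CompleteSpace A]
    [NormedAddCommGroup B] [InnerProductSpace ℝ B] [CompleteSpace B]
    (T Tδ TN : A →L[ℝ] B)
    (hTcpt : IsCompactOperator T) (hTδcpt : IsCompactOperator Tδ)
    (C δ : ℝ) (hC : 0 ≤ C) (hδ : 0 < δ)
    (Nsvd Nδ : ℕ)
    (hNsvd : approxNum T Nsvd ≤ δ)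
    (hpert : ‖Tδ - T‖ ≤ C * δ)
    (hNδmin : ∀ N : ℕ, approxNum Tδ N ≤ (C + 1) * δ → Nδ ≤ N)
    (hTNrank : Module.finrank ℝ (LinearMap.range TN.toLinearMap) ≤ Nδ)
    (hTNerr : ‖Tδ - TN‖ ≤ (C + 1) * δ) :
    Nδ ≤ Nsvd ∧ ‖T - TN‖ ≤ (2 * C + 1) * δ := by
  constructor
  · apply hNδmin
    calc approxNum Tδ Nsvd ≤ approxNum T Nsvd + ‖Tδ - T‖ := approxNum_le_approxNum_add T Tδ Nsvd
      _ ≤ δ + C * δ := add_le_add hNsvd hpert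
      _ = (C + 1) * δ := by ring
  · calc ‖T - TN‖ = ‖(T - Tδ) + (Tδ - TN)‖ := by rw [sub_add_sub_cancel]
      _ ≤ ‖T - Tδ‖ + ‖Tδ - TN‖ := norm_add_le _ _
      _ = ‖Tδ - T‖ + ‖Tδ - TN‖ := by rw [norm_sub_rev]
      _ ≤ C * δ + (C + 1) * δ := add_le_add hpert hTNerr
      _ = (2 * C + 1) * δ := by ring
end
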